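/- For every i ∈ ℤ₊, in Ĥ one has â₀ · û_i = 0 and â₀ · ū_i = 0; that is, û_i and ū_i are 0-eigenvectors of the multiplication operator ad_{â₀} : x ↦ â₀·x. -/

import Mathlib

/-!
Both products are computed termwise from (Ĥ1) and (Ĥ2) at `i = 0`. For `û_i` all terms cancel
over any field. For `ū_i` the correction terms of (Ĥ2) turn `ŝ_{0̄,i} + ŝ_{1̄,i} + ŝ_{2̄,i}` into
`3ŝ_{0̄,i}`, and one finds `â₀ū_i = 5(2â₀ - â_{-i} - â_i + ŝ_{0̄,i})`, which vanishes in
characteristic 5.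
-/

namespace HatAlgebra

/-- Basis of the algebra `Ĥ`: vectors `â i` for `i : ℤ`, `ŝ_{0̄,j}` for `j` a positive
integer, and `ŝ_{1̄,3k}`, `ŝ_{2̄,3k}` for `k` a positive integer. -/
inductive HatB : Type
  | a : ℤ → HatB
  | s0 : ℕ+ → HatB
  | s1 : ℕ+ → HatB
  | s2 : ℕ+ → HatB
  deriving DecidableEq

variable (F : Type*) [Field F]

/-- The underlying vector space of `Ĥ`: the free `F`-vector space on `HatB`. -/
abbrev HatH : Type _ := HatB →₀ F

/-- The basis vector `â i`. -/
noncomputable def aHat (i : ℤ) : HatH F := Finsupp.single (HatB.a i) 1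

/-- The element `ŝ_{r̄,j}` of `Ĥ`, with the conventions `ŝ_{r̄,0} = 0` and
`ŝ_{1̄,j} = ŝ_{0̄,j} = ŝ_{2̄,j}` whenever `3 ∤ j`. -/
noncomputable def sHat (r : ZMod 3) (j : ℕ) : HatH F :=
  if h : j = 0 then 0
  else if h3 : 3 ∣ j then
    if r = 0 then Finsupp.single (HatB.s0 ⟨j, Nat.pos_of_ne_zero h⟩) 1
    else if r = 1 then
      Finsupp.single (HatB.s1 ⟨j / 3,
        Nat.div_pos (Nat.le_of_dvd (Nat.pos_of_ne_zero h) h3) (by norm_num)⟩) 1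
    else
      Finsupp.single (HatB.s2 ⟨j / 3,
        Nat.div_pos (Nat.le_of_dvd (Nat.pos_of_ne_zero h) h3) (by norm_num)⟩) 1
  else Finsupp.single (HatB.s0 ⟨j, Nat.pos_of_ne_zero h⟩) 1

/-- The operation `∗`: `(−1) ∗ 1̄ = −1`, `(−1) ∗ 2̄ = 1`, `0 ∗ t̄ = 0`. -/
def hatStar (x : ℤ) (t : ZMod 3) : ℤ :=
  if x = 0 then 0 else if t = 1 then -1 else if t = 2 then 1 else 0

/-- The coefficient `(δ_{ī,r̄} − 1) ∗ (ī − r̄)` appearing in rule (Ĥ2). -/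
def hatC (i r : ZMod 3) : ℤ := hatStar ((if i = r then 1 else 0) - 1) (i - r)

/-- Rule (Ĥ2): the product `â_i · ŝ_{r̄,j}`. -/
noncomputable def aMulS (i : ℤ) (r : ZMod 3) (j : ℕ) : HatH F :=
  (-2 : F) • aHat F i + (aHat F (i - (j : ℤ)) + aHat F (i + (j : ℤ))) - sHat F r j
    - (hatC (i : ZMod 3) r : F) • (sHat F (r - 1) j - sHat F (r + 1) j)

/-- `ŝ_{0̄,n} + ŝ_{1̄,n} + ŝ_{2̄,n}`. -/
noncomputable def sSum (n : ℕ) : HatH F := sHat F 0 n + sHat F 1 n + sHat F 2 n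

/-- For `r ≠ t` in `ℤ/3ℤ`, the signed sum `ŝ_{r̄,n} + ŝ_{t̄,n} − ŝ_{m̄,n}` where `m̄`
is the third residue class (appearing in rules (Ĥ5), (Ĥ6), (Ĥ7)). -/
noncomputable def sT (r t : ZMod 3) (n : ℕ) : HatH F :=
  sHat F r n + sHat F t n - sHat F (-(r + t)) n

/-- Rules (Ĥ3)–(Ĥ7): the product `ŝ_{r̄,i} · ŝ_{t̄,j}`. -/
noncomputable def sMulS (r : ZMod 3) (i : ℕ) (t : ZMod 3) (j : ℕ) : HatH F :=
  if 3 ∣ i ∧ 3 ∣ j then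
    if r = t then
      (2 : F) • (sHat F r i + sHat F r j) - (sHat F r (Nat.dist i j) + sHat F r (i + j))
    else
      (2 : F) • (sT F r t i + sT F r t j) - (sT F r t (Nat.dist i j) + sT F r t (i + j))
  else
    (2 : F) • (sHat F r i + sHat F t j) - (2 : F) • (sSum F (Nat.dist i j) + sSum F (i + j))

/-- The product of `Ĥ` on basis vectors, given by rules (Ĥ1)–(Ĥ7) (extended
symmetrically, since the product is commutative). -/
noncomputable def mulB : HatB → HatB → HatH F
  | .a i, .a j => (-2 : F) • (aHat F i + aHat F j) + sHat F (i : ZMod 3) (i - j).natAbs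
  | .a i, .s0 j => aMulS F i 0 (j : ℕ)
  | .s0 j, .a i => aMulS F i 0 (j : ℕ)
  | .a i, .s1 k => aMulS F i 1 (3 * (k : ℕ))
  | .s1 k, .a i => aMulS F i 1 (3 * (k : ℕ))
  | .a i, .s2 k => aMulS F i 2 (3 * (k : ℕ))
  | .s2 k, .a i => aMulS F i 2 (3 * (k : ℕ))
  | .s0 i, .s0 j => sMulS F 0 (i : ℕ) 0 (j : ℕ)
  | .s0 i, .s1 k => sMulS F 0 (i : ℕ) 1 (3 * (k : ℕ))
  | .s1 k, .s0 i => sMulS F 0 (i : ℕ) 1 (3 * (k : ℕ))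
  | .s0 i, .s2 k => sMulS F 0 (i : ℕ) 2 (3 * (k : ℕ))
  | .s2 k, .s0 i => sMulS F 0 (i : ℕ) 2 (3 * (k : ℕ))
  | .s1 h, .s1 k => sMulS F 1 (3 * (h : ℕ)) 1 (3 * (k : ℕ))
  | .s1 h, .s2 k => sMulS F 1 (3 * (h : ℕ)) 2 (3 * (k : ℕ))
  | .s2 k, .s1 h => sMulS F 1 (3 * (h : ℕ)) 2 (3 * (k : ℕ))
  | .s2 h, .s2 k => sMulS F 2 (3 * (h : ℕ)) 2 (3 * (k : ℕ))

/-- The commutative bilinear product of `Ĥ`, as a bilinear map. -/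
noncomputable def hatMul : HatH F →ₗ[F] HatH F →ₗ[F] HatH F :=
  Finsupp.lift (HatH F →ₗ[F] HatH F) F HatB fun x => Finsupp.lift (HatH F) F HatB (mulB F x)

/-- The product of two elements of `Ĥ`. -/
noncomputable def hmul (x y : HatH F) : HatH F := hatMul F x y


/-- `û_i := −2â₀ + (â_i + â_{−i}) + 2ŝ_{0̄,i}`. -/
noncomputable def uHat (i : ℕ) : HatH F :=
  (-2 : F) • aHat F 0 + (aHat F (i : ℤ) + aHat F (-(i : ℤ))) + (2 : F) • sHat F 0 i

/-- `ū_i := −2â₀ + (â_{−i} + â_i) − (ŝ_{0̄,i} + ŝ_{1̄,i} + ŝ_{2̄,i})`. -/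
noncomputable def ubar (i : ℕ) : HatH F :=
  (-2 : F) • aHat F 0 + (aHat F (-(i : ℤ)) + aHat F (i : ℤ))
    - (sHat F 0 i + sHat F 1 i + sHat F 2 i)

lemma sHat_zero_right (r : ZMod 3) : sHat F r 0 = 0 := dif_pos rfl

lemma sHat_of_not_dvd (r : ZMod 3) {j : ℕ} (h : ¬ 3 ∣ j) : sHat F r j = sHat F 0 j := by
  have hj : j ≠ 0 := by rintro rfl; exact h (dvd_zero 3)
  simp only [sHat, dif_neg hj, dif_neg h]

lemma hmul_apply (x y : HatH F) : hmul F x y = hatMul F x y := rfl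

lemma hatMul_single_single (x y : HatB) :
    hatMul F (Finsupp.single x 1) (Finsupp.single y 1) = mulB F x y := by
  simp [hatMul]

lemma hatMul_aHat_aHat (i j : ℤ) :
    hatMul F (aHat F i) (aHat F j) = (-2 : F) • (aHat F i + aHat F j) + sHat F i (i - j).natAbs :=
  hatMul_single_single F _ _

lemma aMulS_zero_right (i : ℤ) (r : ZMod 3) : aMulS F i r 0 = 0 := by
  simp only [aMulS, sHat_zero_right, Nat.cast_zero, sub_zero, add_zero, sub_self, smul_zero]
  module

lemma aMulS_of_not_dvd (i : ℤ) (r : ZMod 3) {j : ℕ} (h : ¬ 3 ∣ j) :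
    aMulS F i r j = aMulS F i 0 j := by
  simp only [aMulS, sHat_of_not_dvd F _ h, sub_self, smul_zero]

lemma hatMul_aHat_sHat (i : ℤ) (r : ZMod 3) (j : ℕ) :
    hatMul F (aHat F i) (sHat F r j) = aMulS F i r j := by
  rcases eq_or_ne j 0 with rfl | hj
  · rw [sHat_zero_right, map_zero, aMulS_zero_right]
  by_cases h3 : 3 ∣ j
  · obtain rfl | rfl | rfl : r = 0 ∨ r = 1 ∨ r = 2 := by revert r; decide
    all_goals simp +decide [sHat, hj, h3, aHat, hatMul_single_single, mulB, Nat.mul_div_cancel' h3]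
  · rw [sHat_of_not_dvd F r h3, aMulS_of_not_dvd F i r h3]
    simp [sHat, hj, h3, aHat, hatMul_single_single, mulB]

lemma hatMul_aHat_zero_aHat (j : ℤ) :
    hatMul F (aHat F 0) (aHat F j) = (-2 : F) • (aHat F 0 + aHat F j) + sHat F 0 j.natAbs := by
  simpa using hatMul_aHat_aHat F 0 j

lemma aMulS_zero_zero (j : ℕ) :
    aMulS F 0 0 j = (-2 : F) • aHat F 0 + (aHat F (-j) + aHat F j) - sHat F 0 j := by
  simp [aMulS, show hatC 0 0 = 0 by decide]

-- The correction terms of (Ĥ2) for `r̄ = 1̄, 2̄` add up to `2ŝ_{0̄,j} - ŝ_{1̄,j} - ŝ_{2̄,j}`.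
lemma hatMul_aHat_zero_sSum (j : ℕ) :
    hatMul F (aHat F 0) (sSum F j)
      = (-6 : F) • aHat F 0 + (3 : F) • (aHat F (-j) + aHat F j) - (3 : F) • sHat F 0 j := by
  have h1 : hatC 0 1 = 1 := by decide
  have h2 : hatC 0 2 = -1 := by decide
  rw [sSum, map_add, map_add, hatMul_aHat_sHat, hatMul_aHat_sHat, hatMul_aHat_sHat,
    aMulS_zero_zero]
  simp only [aMulS, Int.cast_zero, zero_sub, zero_add, h1, h2, Int.cast_one,
    Int.cast_neg, one_smul, neg_smul, show (1 : ZMod 3) - 1 = 0 from rfl,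
    show (1 : ZMod 3) + 1 = 2 from rfl, show (2 : ZMod 3) - 1 = 1 from rfl,
    show (2 : ZMod 3) + 1 = 0 from rfl]
  module

theorem uHat_zero_eigenvector [CharP F 5] (i : ℕ) :
    hmul F (aHat F 0) (uHat F i) = 0 ∧ hmul F (aHat F 0) (ubar F i) = 0 := by
  have h5 : (5 : F) = 0 := by exact_mod_cast CharP.cast_eq_zero F 5
  rw [hmul_apply, hmul_apply, uHat, ubar, ← sSum]
  simp only [map_add, map_sub, map_smul, hatMul_aHat_zero_aHat, hatMul_aHat_sHat,
    hatMul_aHat_zero_sSum, aMulS_zero_zero, Int.natAbs_zero, Int.natAbs_neg, Int.natAbs_natCast,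
    sHat_zero_right]
  constructor
  · module
  · linear_combination (norm := module)
      h5 • ((2 : F) • aHat F 0 - (aHat F (-i) + aHat F i) + sHat F 0 i)

end HatAlgebra
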